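/- For nondegenerate real-valued random variables X and Y, the asymmetric grade correlation satisfies −1 ≤ AGC(X,Y) ≤ 1. -/

import Mathlib

open MeasureTheory ProbabilityTheory

noncomputable section

variable {Ω : Type*} [MeasurableSpace Ω]

/-- Mid distribution function of `X` under `μ`: `F̄(x) = P(X < x) + (1/2) P(X = x)`. -/
def mdf (μ : Measure Ω) (X : Ω → ℝ) (x : ℝ) : ℝ :=
  (μ {ω | X ω < x}).toReal + (1 / 2) * (μ {ω | X ω = x}).toReal

/-- Covariance of two real random variables under `μ`. -/
def covar (μ : Measure Ω) (f g : Ω → ℝ) : ℝ :=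
  (∫ ω, f ω * g ω ∂μ) - (∫ ω, f ω ∂μ) * (∫ ω, g ω ∂μ)

/-- Similarity function `s(a,b) = 1{a < b} + (1/2) 1{a = b}`. -/
def simFun (a b : ℝ) : ℝ :=
  (if a < b then 1 else 0) + (1 / 2) * (if a = b then 1 else 0)

/-- Granularity `γ(X) = P(X = X' = X'')` for i.i.d. copies of `X`. -/
def gran (μ : Measure Ω) (X : Ω → ℝ) : ℝ :=
  ((μ.prod (μ.prod μ)) {ω | X ω.1 = X ω.2.1 ∧ X ω.2.1 = X ω.2.2}).toReal

/-- Asymmetric grade correlation `AGC(U,V) = Cov(F̄_U(U), Ḡ_V(V)) / Var(Ḡ_V(V))`. -/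
def agc (μ : Measure Ω) (U V : Ω → ℝ) : ℝ :=
  covar μ (fun ω => mdf μ U (U ω)) (fun ω => mdf μ V (V ω)) /
    covar μ (fun ω => mdf μ V (V ω)) (fun ω => mdf μ V (V ω))

/-- Coefficient of monotone association `CMA(U,V) = (AGC(U,V) + 1) / 2`. -/
def cma (μ : Measure Ω) (U V : Ω → ℝ) : ℝ := (agc μ U V + 1) / 2

/-- `X` is not almost surely constant. -/
def Nondeg (μ : Measure Ω) (X : Ω → ℝ) : Prop := ¬ ∃ c : ℝ, X =ᵐ[μ] fun _ => c

/-- Pearson correlation. -/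
def pcor (μ : Measure Ω) (f g : Ω → ℝ) : ℝ :=
  covar μ f g / (Real.sqrt (covar μ f f) * Real.sqrt (covar μ g g))

/-- Quantile function (generalized inverse of the CDF). -/
def qf (μ : Measure Ω) (Y : Ω → ℝ) (α : ℝ) : ℝ :=
  sInf {y : ℝ | α ≤ (μ {ω | Y ω ≤ y}).toReal}

/-! ### Auxiliary lemmas -/

lemma simFun_nonneg (a b : ℝ) : 0 ≤ simFun a b := by
  unfold simFun; split_ifs <;> norm_num

lemma simFun_le_one (a b : ℝ) : simFun a b ≤ 1 := by
  unfold simFun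
  split_ifs with h1 h2
  · exact absurd h2 (ne_of_lt h1)
  · norm_num
  · norm_num
  · norm_num

lemma simFun_add_swap (a b : ℝ) : simFun a b + simFun b a = 1 := by
  unfold simFun
  rcases lt_trichotomy a b with h | h | h
  · simp [h, h.ne, h.ne', asymm h, not_lt.mpr h.le]
  · subst h; simp; norm_num
  · simp [h, h.ne, h.ne', asymm h, not_lt.mpr h.le]

lemma measurable_simFun : Measurable fun p : ℝ × ℝ => simFun p.1 p.2 := by
  unfold simFun
  apply Measurable.add
  · exact Measurable.ite (measurableSet_lt measurable_fst measurable_snd)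
      measurable_const measurable_const
  · exact ((Measurable.ite (measurableSet_eq_fun measurable_fst measurable_snd)
      measurable_const measurable_const)).const_mul _

lemma integrable_of_bdd {α : Type*} [MeasurableSpace α] {ν : Measure α} [IsFiniteMeasure ν]
    {f : α → ℝ} {C : ℝ} (hf : Measurable f) (h : ∀ a, |f a| ≤ C) : Integrable f ν :=
  Integrable.mono' (integrable_const C) hf.aestronglyMeasurable
    (Filter.Eventually.of_forall fun a => by simpa using h a)

lemma mdf_nonneg (μ : Measure Ω) (X : Ω → ℝ) (x : ℝ) : 0 ≤ mdf μ X x := by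
  unfold mdf; positivity

lemma setle_eq_union (X : Ω → ℝ) (x : ℝ) :
    {ω | X ω ≤ x} = {ω | X ω < x} ∪ {ω | X ω = x} := by
  ext ω; simp [le_iff_lt_or_eq]

lemma measure_eq_add (μ : Measure Ω) (X : Ω → ℝ) (hX : Measurable X) (x : ℝ) :
    μ {ω | X ω ≤ x} = μ {ω | X ω < x} + μ {ω | X ω = x} := by
  rw [setle_eq_union X x]
  have hd : Disjoint {ω | X ω < x} {ω | X ω = x} :=
    Set.disjoint_left.mpr fun ω h1 h2 => absurd h2 (ne_of_lt h1)
  exact measure_union hd (hX (measurableSet_singleton x))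

lemma mdf_le_one (μ : Measure Ω) [IsProbabilityMeasure μ] (X : Ω → ℝ) (hX : Measurable X)
    (x : ℝ) : mdf μ X x ≤ 1 := by
  unfold mdf
  have h := measure_eq_add μ X hX x
  have h1 : (μ {ω | X ω ≤ x}).toReal ≤ 1 := by
    rw [show (1:ℝ) = (μ Set.univ).toReal by simp]
    exact ENNReal.toReal_mono (measure_ne_top μ _) (measure_mono (Set.subset_univ _))
  have h2 : (μ {ω | X ω ≤ x}).toReal
      = (μ {ω | X ω < x}).toReal + (μ {ω | X ω = x}).toReal := by
    rw [h, ENNReal.toReal_add (measure_ne_top μ _) (measure_ne_top μ _)]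
  have h3 : 0 ≤ (μ {ω | X ω = x}).toReal := ENNReal.toReal_nonneg
  linarith

lemma mdf_mono (μ : Measure Ω) [IsProbabilityMeasure μ] (X : Ω → ℝ) (hX : Measurable X) :
    Monotone (mdf μ X) := by
  intro y1 y2 h
  rcases eq_or_lt_of_le h with rfl | hlt
  · exact le_rfl
  · have h2 : (μ {ω | X ω ≤ y1}).toReal
        = (μ {ω | X ω < y1}).toReal + (μ {ω | X ω = y1}).toReal := by
      rw [measure_eq_add μ X hX y1,
        ENNReal.toReal_add (measure_ne_top μ _) (measure_ne_top μ _)]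
    have hsub : {ω | X ω ≤ y1} ⊆ {ω | X ω < y2} := fun ω hω => lt_of_le_of_lt hω hlt
    have h3 : (μ {ω | X ω ≤ y1}).toReal ≤ (μ {ω | X ω < y2}).toReal :=
      ENNReal.toReal_mono (measure_ne_top μ _) (measure_mono hsub)
    have h4 : 0 ≤ (μ {ω | X ω = y1}).toReal := ENNReal.toReal_nonneg
    have h5 : 0 ≤ (μ {ω | X ω = y2}).toReal := ENNReal.toReal_nonneg
    unfold mdf
    linarith

lemma measurable_mdf (μ : Measure Ω) [IsProbabilityMeasure μ] (X : Ω → ℝ)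
    (hX : Measurable X) : Measurable (mdf μ X) := by
  have h1 : Monotone fun x => (μ {ω | X ω < x}).toReal := by
    intro a b hab
    exact ENNReal.toReal_mono (measure_ne_top μ _)
      (measure_mono fun ω hω => lt_of_lt_of_le hω hab)
  have h2 : Monotone fun x => (μ {ω | X ω ≤ x}).toReal := by
    intro a b hab
    exact ENNReal.toReal_mono (measure_ne_top μ _)
      (measure_mono fun ω hω => le_trans hω hab)
  have key : mdf μ X = fun x => (μ {ω | X ω < x}).toReal
      + (1 / 2) * ((μ {ω | X ω ≤ x}).toReal - (μ {ω | X ω < x}).toReal) := by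
    funext x
    have h3 : (μ {ω | X ω ≤ x}).toReal
        = (μ {ω | X ω < x}).toReal + (μ {ω | X ω = x}).toReal := by
      rw [measure_eq_add μ X hX x,
        ENNReal.toReal_add (measure_ne_top μ _) (measure_ne_top μ _)]
    unfold mdf
    rw [h3]; ring
  rw [key]
  exact h1.measurable.add ((h2.measurable.sub h1.measurable).const_mul _)

lemma mdf_eq_integral (μ : Measure Ω) [IsProbabilityMeasure μ] (X : Ω → ℝ)
    (hX : Measurable X) (x : ℝ) : mdf μ X x = ∫ ω, simFun (X ω) x ∂μ := by
  have e1 : (fun ω => (if X ω < x then (1:ℝ) else 0))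
      = Set.indicator {ω | X ω < x} (fun _ => (1:ℝ)) := by
    funext ω; simp [Set.indicator_apply, Set.mem_setOf_eq]
  have e2 : (fun ω => (if X ω = x then (1:ℝ) else 0))
      = Set.indicator {ω | X ω = x} (fun _ => (1:ℝ)) := by
    funext ω; simp [Set.indicator_apply, Set.mem_setOf_eq]
  have m1 : MeasurableSet {ω | X ω < x} := hX measurableSet_Iio
  have m2 : MeasurableSet {ω | X ω = x} := hX (measurableSet_singleton x)
  have i1 : Integrable (fun ω => (if X ω < x then (1:ℝ) else 0)) μ := by
    rw [e1]; exact (integrable_const (1:ℝ)).indicator m1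
  have i2 : Integrable (fun ω => (if X ω = x then (1:ℝ) else 0)) μ := by
    rw [e2]; exact (integrable_const (1:ℝ)).indicator m2
  have key : ∫ ω, simFun (X ω) x ∂μ
      = (∫ ω, (if X ω < x then (1:ℝ) else 0) ∂μ)
        + (1/2) * ∫ ω, (if X ω = x then (1:ℝ) else 0) ∂μ := by
    unfold simFun
    rw [integral_add i1 (i2.const_mul _), integral_const_mul]
  rw [key, e1, e2]
  unfold mdf
  rw [show (Set.indicator {ω | X ω < x} (fun _ => (1:ℝ))) = Set.indicator {ω | X ω < x} 1
    from rfl, show (Set.indicator {ω | X ω = x} (fun _ => (1:ℝ))) = Set.indicator {ω | X ω = x} 1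
    from rfl, integral_indicator_one m1, integral_indicator_one m2]
  rfl

lemma integral_mdf_self (μ : Measure Ω) [IsProbabilityMeasure μ] (X : Ω → ℝ)
    (hX : Measurable X) : ∫ ω, mdf μ X (X ω) ∂μ = 1 / 2 := by
  have hmeas : Measurable fun p : Ω × Ω => simFun (X p.2) (X p.1) :=
    measurable_simFun.comp ((hX.comp measurable_snd).prodMk (hX.comp measurable_fst))
  have hbd : ∀ p : Ω × Ω, |simFun (X p.2) (X p.1)| ≤ 1 := fun p =>
    abs_le.mpr ⟨by linarith [simFun_nonneg (X p.2) (X p.1)], simFun_le_one _ _⟩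
  have hint : Integrable (fun p : Ω × Ω => simFun (X p.2) (X p.1)) (μ.prod μ) :=
    integrable_of_bdd hmeas hbd
  have hmeas' : Measurable fun p : Ω × Ω => simFun (X p.1) (X p.2) :=
    measurable_simFun.comp ((hX.comp measurable_fst).prodMk (hX.comp measurable_snd))
  have hint' : Integrable (fun p : Ω × Ω => simFun (X p.1) (X p.2)) (μ.prod μ) :=
    integrable_of_bdd hmeas' (fun p =>
      abs_le.mpr ⟨by linarith [simFun_nonneg (X p.1) (X p.2)], simFun_le_one _ _⟩)
  have h1 : ∫ p : Ω × Ω, simFun (X p.2) (X p.1) ∂(μ.prod μ) = ∫ ω, mdf μ X (X ω) ∂μ := by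
    rw [integral_prod _ hint]
    congr 1
    funext ω
    exact (mdf_eq_integral μ X hX (X ω)).symm
  have h2 : ∫ p : Ω × Ω, simFun (X p.1) (X p.2) ∂(μ.prod μ) = ∫ ω, mdf μ X (X ω) ∂μ := by
    have hs := integral_prod_swap (μ := μ) (ν := μ)
      (fun p : Ω × Ω => simFun (X p.1) (X p.2))
    -- hs : ∫ z, simFun (X z.2) (X z.1) = ∫ z, simFun (X z.1) (X z.2)
    rw [← hs]; exact h1
  have h3 : ∫ p : Ω × Ω, (simFun (X p.2) (X p.1) + simFun (X p.1) (X p.2)) ∂(μ.prod μ)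
      = 1 := by
    have : (fun p : Ω × Ω => simFun (X p.2) (X p.1) + simFun (X p.1) (X p.2))
        = fun _ => (1:ℝ) := by
      funext p; exact simFun_add_swap _ _
    rw [this]; simp
  rw [integral_add hint hint', h1, h2] at h3
  linarith

/-- The key symmetrization trick. -/
lemma swap_trick (μ : Measure Ω) [IsProbabilityMeasure μ] (K : Ω × Ω → ℝ) (G : Ω → ℝ)
    (hK : Measurable K) (hG : Measurable G) (hKb : ∀ p, |K p| ≤ 2) (hGb : ∀ ω, |G ω| ≤ 1)
    (hanti : ∀ p : Ω × Ω, K p.swap = - K p)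
    (hsign : ∀ p : Ω × Ω, K p * (G p.1 - G p.2) ≤ 0) :
    ∫ p : Ω × Ω, K p * G p.1 ∂(μ.prod μ) ≤ 0 := by
  have hG1 : Measurable fun p : Ω × Ω => G p.1 := hG.comp measurable_fst
  have hG2 : Measurable fun p : Ω × Ω => G p.2 := hG.comp measurable_snd
  have b1 : ∀ p : Ω × Ω, |K p * G p.1| ≤ 2 := fun p => by
    rw [abs_mul]
    calc |K p| * |G p.1| ≤ 2 * 1 := by
          exact mul_le_mul (hKb p) (hGb p.1) (abs_nonneg _) (by norm_num)
      _ = 2 := by norm_num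
  have b2 : ∀ p : Ω × Ω, |K p * G p.2| ≤ 2 := fun p => by
    rw [abs_mul]
    calc |K p| * |G p.2| ≤ 2 * 1 := by
          exact mul_le_mul (hKb p) (hGb p.2) (abs_nonneg _) (by norm_num)
      _ = 2 := by norm_num
  have i1 : Integrable (fun p : Ω × Ω => K p * G p.1) (μ.prod μ) :=
    integrable_of_bdd (hK.mul hG1) b1
  have i2 : Integrable (fun p : Ω × Ω => K p * G p.2) (μ.prod μ) :=
    integrable_of_bdd (hK.mul hG2) b2
  have hswap : ∫ p : Ω × Ω, K p * G p.2 ∂(μ.prod μ)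
      = - ∫ p : Ω × Ω, K p * G p.1 ∂(μ.prod μ) := by
    calc ∫ p : Ω × Ω, K p * G p.2 ∂(μ.prod μ)
        = ∫ p : Ω × Ω, -(K p.swap * G p.swap.1) ∂(μ.prod μ) := by
          congr 1; funext p; simp only [Prod.fst_swap, hanti]; ring
      _ = - ∫ p : Ω × Ω, K p.swap * G p.swap.1 ∂(μ.prod μ) := integral_neg _
      _ = - ∫ p : Ω × Ω, K p * G p.1 ∂(μ.prod μ) := by
          rw [integral_prod_swap (μ := μ) (ν := μ) (fun p : Ω × Ω => K p * G p.1)]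
  have hdiff : ∫ p : Ω × Ω, (K p * G p.1 - K p * G p.2) ∂(μ.prod μ)
      = 2 * ∫ p : Ω × Ω, K p * G p.1 ∂(μ.prod μ) := by
    rw [integral_sub i1 i2, hswap]; ring
  have hle : ∫ p : Ω × Ω, (K p * G p.1 - K p * G p.2) ∂(μ.prod μ) ≤ 0 :=
    integral_nonpos fun p => by
      have := hsign p
      have : K p * G p.1 - K p * G p.2 ≤ 0 := by nlinarith [hsign p]
      simpa using this
  linarith

/-- `−1 ≤ AGC(X,Y) ≤ 1` for nondegenerate `X`, `Y`. -/
theorem stmt_9 (μ : Measure Ω) [IsProbabilityMeasure μ] (X Y : Ω → ℝ)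
    (hX : Measurable X) (hY : Measurable Y) (hXnd : Nondeg μ X) (hYnd : Nondeg μ Y) :
    -1 ≤ agc μ X Y ∧ agc μ X Y ≤ 1 := by
  set F : Ω → ℝ := fun ω => mdf μ X (X ω) with hFdef
  set G : Ω → ℝ := fun ω => mdf μ Y (Y ω) with hGdef
  have hFme : Measurable F := (measurable_mdf μ X hX).comp hX
  have hGme : Measurable G := (measurable_mdf μ Y hY).comp hY
  have hFb : ∀ ω, |F ω| ≤ 1 := fun ω =>
    abs_le.mpr ⟨by linarith [mdf_nonneg μ X (X ω)], mdf_le_one μ X hX (X ω)⟩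
  have hGb : ∀ ω, |G ω| ≤ 1 := fun ω =>
    abs_le.mpr ⟨by linarith [mdf_nonneg μ Y (Y ω)], mdf_le_one μ Y hY (Y ω)⟩
  have hEF : ∫ ω, F ω ∂μ = 1 / 2 := integral_mdf_self μ X hX
  have hEG : ∫ ω, G ω ∂μ = 1 / 2 := integral_mdf_self μ Y hY
  -- product-measure computations
  have hsXme : Measurable fun p : Ω × Ω => simFun (X p.2) (X p.1) :=
    measurable_simFun.comp ((hX.comp measurable_snd).prodMk (hX.comp measurable_fst))
  have hsYme : Measurable fun p : Ω × Ω => simFun (Y p.2) (Y p.1) :=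
    measurable_simFun.comp ((hY.comp measurable_snd).prodMk (hY.comp measurable_fst))
  have hG1me : Measurable fun p : Ω × Ω => G p.1 := hGme.comp measurable_fst
  have hsb : ∀ (Z : Ω → ℝ) (p : Ω × Ω), |simFun (Z p.2) (Z p.1) * G p.1| ≤ 1 := by
    intro Z p
    rw [abs_mul]
    have h1 : |simFun (Z p.2) (Z p.1)| ≤ 1 :=
      abs_le.mpr ⟨by linarith [simFun_nonneg (Z p.2) (Z p.1)], simFun_le_one _ _⟩
    calc |simFun (Z p.2) (Z p.1)| * |G p.1| ≤ 1 * 1 :=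
          mul_le_mul h1 (hGb p.1) (abs_nonneg _) (by norm_num)
      _ = 1 := by norm_num
  have hiXG : Integrable (fun p : Ω × Ω => simFun (X p.2) (X p.1) * G p.1) (μ.prod μ) :=
    integrable_of_bdd (hsXme.mul hG1me) (hsb X)
  have hiYG : Integrable (fun p : Ω × Ω => simFun (Y p.2) (Y p.1) * G p.1) (μ.prod μ) :=
    integrable_of_bdd (hsYme.mul hG1me) (hsb Y)
  have hiG1 : Integrable (fun p : Ω × Ω => G p.1) (μ.prod μ) :=
    integrable_of_bdd hG1me (fun p => hGb p.1)
  have hFG : ∫ p : Ω × Ω, simFun (X p.2) (X p.1) * G p.1 ∂(μ.prod μ)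
      = ∫ ω, F ω * G ω ∂μ := by
    rw [integral_prod _ hiXG]
    congr 1
    funext ω
    show ∫ ω', simFun (X ω') (X ω) * G ω ∂μ = F ω * G ω
    rw [integral_mul_const]
    congr 1
    exact (mdf_eq_integral μ X hX (X ω)).symm
  have hGG : ∫ p : Ω × Ω, simFun (Y p.2) (Y p.1) * G p.1 ∂(μ.prod μ)
      = ∫ ω, G ω * G ω ∂μ := by
    rw [integral_prod _ hiYG]
    congr 1
    funext ω
    show ∫ ω', simFun (Y ω') (Y ω) * G ω ∂μ = G ω * G ω
    rw [integral_mul_const]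
    congr 1
    exact (mdf_eq_integral μ Y hY (Y ω)).symm
  have hG1int : ∫ p : Ω × Ω, G p.1 ∂(μ.prod μ) = 1 / 2 := by
    rw [integral_prod _ hiG1]
    simp only [integral_const, probReal_univ, ENNReal.toReal_one, one_smul]
    exact hEG
  -- monotonicity of mdf applied to G differences
  have hGmono : ∀ p : Ω × Ω, Y p.2 ≤ Y p.1 → G p.2 ≤ G p.1 := fun p h =>
    mdf_mono μ Y hY h
  have hGeq : ∀ p : Ω × Ω, Y p.2 = Y p.1 → G p.1 - G p.2 = 0 := fun p h => by
    simp only [hGdef]; rw [h]; ring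
  -- Key bound 1 : Cov(F,G) ≤ Var(G)
  have key1 : (∫ ω, F ω * G ω ∂μ) - ∫ ω, G ω * G ω ∂μ ≤ 0 := by
    have := swap_trick μ
      (fun p : Ω × Ω => simFun (X p.2) (X p.1) - simFun (Y p.2) (Y p.1)) G
      (hsXme.sub hsYme) hGme
      (fun p => by
        have a1 := simFun_nonneg (X p.2) (X p.1)
        have a2 := simFun_le_one (X p.2) (X p.1)
        have a3 := simFun_nonneg (Y p.2) (Y p.1)
        have a4 := simFun_le_one (Y p.2) (Y p.1)
        rw [abs_le]; constructor <;> simp <;> linarith)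
      hGb
      (fun p => by
        have e1 := simFun_add_swap (X p.1) (X p.2)
        have e2 := simFun_add_swap (Y p.1) (Y p.2)
        simp only [Prod.fst_swap, Prod.snd_swap]
        linarith)
      (fun p => by
        rcases lt_trichotomy (Y p.2) (Y p.1) with h | h | h
        · have hs : simFun (Y p.2) (Y p.1) = 1 := by
            unfold simFun; simp [h, h.ne]
          have hg : 0 ≤ G p.1 - G p.2 := by linarith [hGmono p h.le]
          have hk : simFun (X p.2) (X p.1) - simFun (Y p.2) (Y p.1) ≤ 0 := by
            rw [hs]; linarith [simFun_le_one (X p.2) (X p.1)]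
          exact mul_nonpos_iff.mpr (Or.inr ⟨hk, hg⟩)
        · rw [hGeq p h, mul_zero]
        · have hs : simFun (Y p.2) (Y p.1) = 0 := by
            unfold simFun; simp [asymm h, h.ne']
          have hg : G p.1 - G p.2 ≤ 0 := by
            have : G p.1 ≤ G p.2 := mdf_mono μ Y hY h.le
            linarith
          have hk : 0 ≤ simFun (X p.2) (X p.1) - simFun (Y p.2) (Y p.1) := by
            rw [hs]; linarith [simFun_nonneg (X p.2) (X p.1)]
          exact mul_nonpos_iff.mpr (Or.inl ⟨hk, hg⟩))
    have hsplit : ∫ p : Ω × Ω,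
        (simFun (X p.2) (X p.1) - simFun (Y p.2) (Y p.1)) * G p.1 ∂(μ.prod μ)
        = (∫ ω, F ω * G ω ∂μ) - ∫ ω, G ω * G ω ∂μ := by
      rw [show (fun p : Ω × Ω =>
          (simFun (X p.2) (X p.1) - simFun (Y p.2) (Y p.1)) * G p.1)
          = fun p : Ω × Ω =>
          simFun (X p.2) (X p.1) * G p.1 - simFun (Y p.2) (Y p.1) * G p.1 by
        funext p; ring]
      rw [integral_sub hiXG hiYG, hFG, hGG]
    rw [hsplit] at this
    exact this
  -- Key bound 2 : -Var(G) ≤ Cov(F,G)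
  have key2 : (1:ℝ) / 2 - (∫ ω, F ω * G ω ∂μ) - ∫ ω, G ω * G ω ∂μ ≤ 0 := by
    have := swap_trick μ
      (fun p : Ω × Ω => 1 - simFun (X p.2) (X p.1) - simFun (Y p.2) (Y p.1)) G
      ((measurable_const.sub hsXme).sub hsYme) hGme
      (fun p => by
        have a1 := simFun_nonneg (X p.2) (X p.1)
        have a2 := simFun_le_one (X p.2) (X p.1)
        have a3 := simFun_nonneg (Y p.2) (Y p.1)
        have a4 := simFun_le_one (Y p.2) (Y p.1)
        rw [abs_le]; constructor <;> simp <;> linarith)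
      hGb
      (fun p => by
        have e1 := simFun_add_swap (X p.1) (X p.2)
        have e2 := simFun_add_swap (Y p.1) (Y p.2)
        simp only [Prod.fst_swap, Prod.snd_swap]
        linarith)
      (fun p => by
        rcases lt_trichotomy (Y p.2) (Y p.1) with h | h | h
        · have hs : simFun (Y p.2) (Y p.1) = 1 := by
            unfold simFun; simp [h, h.ne]
          have hg : 0 ≤ G p.1 - G p.2 := by linarith [hGmono p h.le]
          have hk : 1 - simFun (X p.2) (X p.1) - simFun (Y p.2) (Y p.1) ≤ 0 := by
            rw [hs]; linarith [simFun_nonneg (X p.2) (X p.1)]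
          exact mul_nonpos_iff.mpr (Or.inr ⟨hk, hg⟩)
        · rw [hGeq p h, mul_zero]
        · have hs : simFun (Y p.2) (Y p.1) = 0 := by
            unfold simFun; simp [asymm h, h.ne']
          have hg : G p.1 - G p.2 ≤ 0 := by
            have : G p.1 ≤ G p.2 := mdf_mono μ Y hY h.le
            linarith
          have hk : 0 ≤ 1 - simFun (X p.2) (X p.1) - simFun (Y p.2) (Y p.1) := by
            rw [hs]; linarith [simFun_le_one (X p.2) (X p.1)]
          exact mul_nonpos_iff.mpr (Or.inl ⟨hk, hg⟩))
    have hsplit : ∫ p : Ω × Ω,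
        (1 - simFun (X p.2) (X p.1) - simFun (Y p.2) (Y p.1)) * G p.1 ∂(μ.prod μ)
        = (1:ℝ) / 2 - (∫ ω, F ω * G ω ∂μ) - ∫ ω, G ω * G ω ∂μ := by
      rw [show (fun p : Ω × Ω =>
          (1 - simFun (X p.2) (X p.1) - simFun (Y p.2) (Y p.1)) * G p.1)
          = fun p : Ω × Ω => (G p.1 - simFun (X p.2) (X p.1) * G p.1)
            - simFun (Y p.2) (Y p.1) * G p.1 by
        funext p; ring]
      have hiGX : Integrable
          (fun p : Ω × Ω => G p.1 - simFun (X p.2) (X p.1) * G p.1) (μ.prod μ) :=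
        hiG1.sub hiXG
      rw [integral_sub hiGX hiYG, integral_sub hiG1 hiXG, hFG, hGG, hG1int]
    rw [hsplit] at this
    exact this
  -- assemble
  have hC : covar μ F G = (∫ ω, F ω * G ω ∂μ) - 1 / 4 := by
    unfold covar; rw [hEF, hEG]; ring
  have hV : covar μ G G = (∫ ω, G ω * G ω ∂μ) - 1 / 4 := by
    unfold covar; rw [hEG]; ring
  have hCV1 : covar μ F G ≤ covar μ G G := by rw [hC, hV]; linarith
  have hCV2 : - covar μ G G ≤ covar μ F G := by rw [hC, hV]; linarith
  have hVnonneg : 0 ≤ covar μ G G := by linarith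
  have hagc : agc μ X Y = covar μ F G / covar μ G G := rfl
  rcases eq_or_lt_of_le hVnonneg with hV0 | hVpos
  · have hC0 : covar μ F G = 0 := le_antisymm (by linarith) (by linarith)
    rw [hagc, hC0, ← hV0]
    norm_num
  · constructor
    · rw [hagc, le_div_iff₀ hVpos]
      linarith
    · rw [hagc, div_le_one hVpos]
      exact hCV1

end
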